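/- arXiv:1201.5097 — 2 statements merged into one kernel-verified Lean document; each statement's English description precedes it below -/
import Mathlib

section
/- Let m = m(n) satisfy C·log log n ≤ m ≤ n - C·log n for a suitable absolute constant C, and set s₀ = 2·lg(m·log n). Then Σ_{s=1}^{⌈s₀⌉-1} C(m,s)·C(n-m,s)·C(n,m)^{2^{-s}-1} → 0 as n → ∞. -/
/-!
Every term is at most `n ^ (2S) * C(n,m) ^ (-1/2)`, where `S = ⌈s₀⌉ - 1 ≤ 3 log (m log n)`, so the
sum is at most `n ^ (3S) / √C(n,m)`, which is `≤ 1/n` as soon as `n ^ (6S+2) ≤ C(n,m)`.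
For that lower bound, `C(n,m) ≥ C(n,j) ≥ (n/j) ^ j` for every `j ≤ min m (n-m)`, and with
`j = min m ⌊100 log n⌋` this gives `log C(n,m) ≥ j log n / 2`. If `j = m`, the hypothesis
`m ≥ 100 log log n` makes `m / 2` dominate `18 (log m + log log n) + 2`; otherwise `j ≈ 100 log n`
dominates it because `log m ≤ log n`.
-/

open Filter Real

namespace Nat

theorem choose_le_choose_of_le_of_le_half {n i j : ℕ} (hij : i ≤ j) (hj : j ≤ n / 2) :
    n.choose i ≤ n.choose j := by
  induction j, hij using Nat.le_induction with
  | base => rfl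
  | succ j _ ih => exact (ih (by omega)).trans (choose_le_succ_of_lt_half_left (by omega))

theorem choose_le_choose_of_le_of_add_le {n m j : ℕ} (hjm : j ≤ m) (hmn : m + j ≤ n) :
    n.choose j ≤ n.choose m := by
  rcases le_or_gt m (n / 2) with h | h
  · exact choose_le_choose_of_le_of_le_half hjm h
  · rw [← choose_symm (by omega : m ≤ n)]
    exact choose_le_choose_of_le_of_le_half (by omega) (by omega)

theorem div_pow_le_choose {n k : ℕ} (h : k ≤ n) : ((n : ℝ) / k) ^ k ≤ n.choose k := by
  induction k generalizing n with
  | zero => simp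
  | succ k ih =>
    obtain ⟨n, rfl⟩ : ∃ n', n = n' + 1 := ⟨n - 1, by omega⟩
    set r : ℝ := ((n + 1 : ℕ) : ℝ) / (k + 1 : ℕ)
    have hr : r ^ k ≤ ((n : ℝ) / k) ^ k := by
      rcases k.eq_zero_or_pos with rfl | hk
      · simp
      have hkn : (k : ℝ) ≤ n := by exact_mod_cast (by omega : k ≤ n)
      gcongr
      rw [div_le_div_iff₀ (by positivity) (by positivity)]
      push_cast
      linarith
    have hpascal : r * n.choose k = (n + 1).choose (k + 1) := by
      rw [div_mul_eq_mul_div, div_eq_iff (by positivity)]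
      exact_mod_cast Nat.add_one_mul_choose_eq n k
    calc r ^ (k + 1) = r * r ^ k := _root_.pow_succ' r k
      _ ≤ r * n.choose k := by gcongr; exact hr.trans (ih (by omega))
      _ = (n + 1).choose (k + 1) := hpascal

end Nat

theorem mul_log_div_le_log_choose {n m j : ℕ} (hjm : j ≤ m) (hmn : m + j ≤ n) :
    j * log (n / j) ≤ log (n.choose m) := by
  rcases j.eq_zero_or_pos with rfl | hj
  · simpa using log_natCast_nonneg _
  have hn : (0 : ℝ) < n := by exact_mod_cast (by omega : 0 < n)
  rw [← log_pow]
  apply log_le_log (by positivity)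
  exact (Nat.div_pow_le_choose (by omega)).trans
    (by exact_mod_cast Nat.choose_le_choose_of_le_of_add_le hjm hmn)

theorem sum_choose_mul_choose_mul_rpow_le {n m : ℕ} (hn : 1 ≤ n) (hmn : m ≤ n) (S : ℕ) :
    ∑ s ∈ Finset.Icc 1 S, (m.choose s : ℝ) * ((n - m).choose s : ℝ) *
        ((n.choose m : ℝ) ^ ((2 : ℝ) ^ (-(s : ℝ)) - 1)) ≤
      S * ((n : ℝ) ^ (2 * S) * (n.choose m : ℝ) ^ (-(1 / 2) : ℝ)) := by
  have hC : (1 : ℝ) ≤ n.choose m := by exact_mod_cast Nat.choose_pos hmn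
  have hterm : ∀ s ∈ Finset.Icc 1 S, (m.choose s : ℝ) * ((n - m).choose s : ℝ) *
      ((n.choose m : ℝ) ^ ((2 : ℝ) ^ (-(s : ℝ)) - 1)) ≤
        (n : ℝ) ^ (2 * S) * (n.choose m : ℝ) ^ (-(1 / 2) : ℝ) := by
    intro s hs
    obtain ⟨hs1, hsS⟩ := Finset.mem_Icc.mp hs
    have hchoose : (m.choose s : ℝ) * ((n - m).choose s : ℝ) ≤ (n : ℝ) ^ (2 * S) :=
      calc (m.choose s : ℝ) * ((n - m).choose s : ℝ) ≤ (n : ℝ) ^ s * (n : ℝ) ^ s := by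
            gcongr <;> exact_mod_cast (Nat.choose_le_pow _ _).trans (Nat.pow_le_pow_left (by omega) _)
        _ = (n : ℝ) ^ (2 * s) := by ring
        _ ≤ (n : ℝ) ^ (2 * S) := pow_le_pow_right₀ (by exact_mod_cast hn) (by omega)
    have hexp : (2 : ℝ) ^ (-(s : ℝ)) - 1 ≤ -(1 / 2) := by
      have : (2 : ℝ) ^ (-(s : ℝ)) ≤ 2 ^ (-1 : ℝ) :=
        rpow_le_rpow_of_exponent_le one_le_two (by simpa using hs1)
      rw [rpow_neg_one] at this
      linarith
    exact mul_le_mul hchoose (rpow_le_rpow_of_exponent_le hC hexp) (by positivity) (by positivity)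
  calc _ ≤ ∑ _s ∈ Finset.Icc 1 S, (n : ℝ) ^ (2 * S) * (n.choose m : ℝ) ^ (-(1 / 2) : ℝ) :=
        Finset.sum_le_sum hterm
    _ = _ := by simp

theorem natCast_mul_pow_mul_rpow_neg_half_le {n S : ℕ} {c : ℝ} (hn : 2 ≤ n)
    (hc : (n : ℝ) ^ (6 * S + 2) ≤ c) : S * ((n : ℝ) ^ (2 * S) * c ^ (-(1 / 2) : ℝ)) ≤ 1 / n := by
  have hc0 : 0 ≤ c := (by positivity : (0 : ℝ) ≤ (n : ℝ) ^ (6 * S + 2)).trans hc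
  have hS : (S : ℝ) ≤ (n : ℝ) ^ S := by
    exact_mod_cast Nat.lt_two_pow_self.le.trans (Nat.pow_le_pow_left hn S)
  have hsqrt : (n : ℝ) ^ (3 * S + 1) ≤ c ^ (1 / 2 : ℝ) := by
    rw [← sqrt_eq_rpow, le_sqrt (by positivity) hc0]
    calc ((n : ℝ) ^ (3 * S + 1)) ^ 2 = (n : ℝ) ^ (6 * S + 2) := by ring
      _ ≤ c := hc
  have hn0 : (0 : ℝ) < n := by positivity
  calc S * ((n : ℝ) ^ (2 * S) * c ^ (-(1 / 2) : ℝ)) = S * (n : ℝ) ^ (2 * S) / c ^ (1 / 2 : ℝ) := by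
        rw [rpow_neg hc0, div_eq_mul_inv]; ring
    _ ≤ (n : ℝ) ^ S * (n : ℝ) ^ (2 * S) / (n : ℝ) ^ (3 * S + 1) := by gcongr
    _ = 1 / n := by field_simp; ring

theorem natCast_ceil_toNat_sub_one_le {x : ℝ} (hx : 0 ≤ x) : ((⌈x⌉.toNat - 1 : ℕ) : ℝ) ≤ x := by
  rw [Int.ceil_toNat]
  have := Nat.ceil_lt_add_one hx
  rcases (⌈x⌉₊).eq_zero_or_pos with h | h
  · simp [h, hx]
  · rw [Nat.cast_sub h]; push_cast; linarith

theorem two_mul_logb_two_le {y : ℝ} (hy : 1 ≤ y) : 2 * logb 2 y ≤ 3 * log y := by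
  have h2 := log_two_gt_d9
  rw [logb, mul_div_assoc', div_le_iff₀ (by linarith)]
  nlinarith [log_nonneg hy]

theorem log_le_two_mul_sqrt {x : ℝ} (hx : 0 ≤ x) : log x ≤ 2 * √x := by
  have := log_le_rpow_div hx one_half_pos
  rwa [← sqrt_eq_rpow, div_eq_mul_inv, inv_div, div_one, mul_comm] at this

theorem log_le_div_ten {x : ℝ} (hx : 400 ≤ x) : log x ≤ x / 10 := by
  have hsqrt : 20 ≤ √x := le_sqrt_of_sq_le (by linarith)
  have hsq := sq_sqrt (by linarith : (0 : ℝ) ≤ x)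
  nlinarith [log_le_two_mul_sqrt (by linarith : (0 : ℝ) ≤ x)]

theorem half_mul_log_le_log_choose {n m j : ℕ} (hL : 400 ≤ log n) (hj : (j : ℝ) ≤ 100 * log n)
    (hjm : j ≤ m) (hmn : m + j ≤ n) : j * log n / 2 ≤ log (n.choose m) := by
  refine le_trans ?_ (mul_log_div_le_log_choose hjm hmn)
  rcases j.eq_zero_or_pos with rfl | hj0
  · simp
  have hn : (0 : ℝ) < n := by exact_mod_cast (by omega : 0 < n)
  have hlogj : log j ≤ log n / 2 :=
    calc log j ≤ log (100 * log n) := log_le_log (by positivity) hj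
      _ = log 100 + log (log n) := log_mul (by norm_num) (by linarith)
      _ ≤ log n / 2 := by
        linarith [log_le_sub_one_of_pos (by norm_num : (0 : ℝ) < 100), log_le_div_ten hL]
  rw [mul_div_assoc, log_div hn.ne' (by positivity)]
  gcongr
  linarith

theorem le_log_choose {n m : ℕ} (hL : 400 ≤ log n) (hLL : 200 ≤ log (log n))
    (hm1 : 100 * log (log n) ≤ m) (hm2 : (m : ℝ) ≤ n - 100 * log n) :
    (18 * (log m + log (log n)) + 2) * log n ≤ log (n.choose m) := by
  set L := log n
  have hm0 : (0 : ℝ) < m := by linarith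
  have hlogm : log m ≤ L := log_le_log hm0 (by linarith)
  have hLL' : log L ≤ L / 10 := log_le_div_ten hL
  rcases le_or_gt (m : ℝ) (100 * L) with hsmall | hlarge
  · have hC := half_mul_log_le_log_choose hL hsmall le_rfl
      (by exact_mod_cast (by linarith : (m : ℝ) + m ≤ n))
    have hsqrt : 141 ≤ √m := le_sqrt_of_sq_le (by linarith)
    have hsq := sq_sqrt hm0.le
    have key : 18 * (log m + log L) + 2 ≤ m / 2 := by
      nlinarith [log_le_two_mul_sqrt hm0.le]
    linarith [mul_le_mul_of_nonneg_right key (by linarith : 0 ≤ L)]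
  · set j := ⌊100 * L⌋₊
    have hj : (j : ℝ) ≤ 100 * L := Nat.floor_le (by positivity)
    have hj' : 100 * L < j + 1 := Nat.lt_floor_add_one _
    have hC := half_mul_log_le_log_choose hL hj (Nat.floor_le_of_le hlarge.le)
      (by exact_mod_cast (by linarith : (m : ℝ) + j ≤ n))
    have key : 18 * (log m + log L) + 2 ≤ j / 2 := by linarith
    linarith [mul_le_mul_of_nonneg_right key (by linarith : 0 ≤ L)]

theorem sum_choose_mul_choose_mul_rpow_le_inv {n m : ℕ} (hL : 400 ≤ log n)
    (hLL : 200 ≤ log (log n)) (hm1 : 100 * log (log n) ≤ m) (hm2 : (m : ℝ) ≤ n - 100 * log n) :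
    ∑ s ∈ Finset.Icc 1 ((⌈2 * logb 2 ((m : ℝ) * log n)⌉.toNat) - 1),
        (m.choose s : ℝ) * ((n - m).choose s : ℝ) *
          ((n.choose m : ℝ) ^ ((2 : ℝ) ^ (-(s : ℝ)) - 1)) ≤ 1 / n := by
  set S := ⌈2 * logb 2 ((m : ℝ) * log n)⌉.toNat - 1
  have hn : 2 ≤ n := by
    have : (1 : ℝ) < n := by rw [← log_pos_iff n.cast_nonneg]; linarith
    exact_mod_cast this
  have hmn : m ≤ n := by exact_mod_cast (by linarith : (m : ℝ) ≤ n)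
  have hm0 : (0 : ℝ) < m := by linarith
  have hmL : 1 ≤ (m : ℝ) * log n := by nlinarith
  have hS : (S : ℝ) ≤ 3 * (log m + log (log n)) :=
    calc (S : ℝ) ≤ 2 * logb 2 (m * log n) :=
          natCast_ceil_toNat_sub_one_le (by have := logb_nonneg one_lt_two hmL; positivity)
      _ ≤ 3 * log (m * log n) := two_mul_logb_two_le hmL
      _ = 3 * (log m + log (log n)) := by rw [log_mul (by positivity) (by linarith)]
  have hC : (n : ℝ) ^ (6 * S + 2) ≤ n.choose m := by
    rw [← log_le_log_iff (by positivity) (by exact_mod_cast Nat.choose_pos hmn), log_pow]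
    push_cast
    calc (6 * S + 2 : ℝ) * log n ≤ (18 * (log m + log (log n)) + 2) * log n :=
          mul_le_mul_of_nonneg_right (by linarith) (by linarith)
      _ ≤ log (n.choose m) := le_log_choose hL hLL hm1 hm2
  exact (sum_choose_mul_choose_mul_rpow_le (by omega) hmn S).trans
    (natCast_mul_pow_mul_rpow_neg_half_le hn hC)

theorem sigma2_tendsto_zero :
    ∃ C : ℝ, 0 < C ∧ ∀ m : ℕ → ℕ,
      (∀ᶠ n : ℕ in atTop,
          C * Real.log (Real.log n) ≤ (m n : ℝ) ∧ (m n : ℝ) ≤ (n : ℝ) - C * Real.log n) →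
      Tendsto
        (fun n : ℕ =>
          ∑ s ∈ Finset.Icc 1 ((⌈2 * Real.logb 2 ((m n : ℝ) * Real.log n)⌉.toNat) - 1),
            ((m n).choose s : ℝ) * ((n - m n).choose s : ℝ) *
              ((n.choose (m n) : ℝ) ^ ((2 : ℝ) ^ (-(s : ℝ)) - 1)))
        atTop (nhds 0) := by
  refine ⟨100, by norm_num, fun m hm => ?_⟩
  have hlog : Tendsto (fun n : ℕ => log n) atTop atTop :=
    tendsto_log_atTop.comp tendsto_natCast_atTop_atTop
  refine squeeze_zero' (Eventually.of_forall fun n => Finset.sum_nonneg fun s _ => by positivity)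
    ?_ tendsto_one_div_atTop_nhds_zero_nat
  filter_upwards [hm, hlog.eventually_ge_atTop 400,
    (tendsto_log_atTop.comp hlog).eventually_ge_atTop 200] with n hmn hL hLL
  exact sum_choose_mul_choose_mul_rpow_le_inv hL hLL hmn.1 hmn.2
end

section
/- Fix 0 < β < 1 and let p = 2^{-βn}, δ = β^{-β}(1-β)^{-(1-β)}. With m = (1-β)n - φ(n) where φ(n) = lg(n ln δ) + ω(n)·o(1) appropriately chosen (and φ(n) ≤ lg n), the expected number of m-element hitting sets satisfies E[X_m] ≤ C(n,m)·exp(-2^{φ(n)}) → 0 as n → ∞. -/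
open MeasureTheory Filter Real
open scoped ENNReal

/-- The random set system `R(n,p)`: each subset of `[n]` is selected
independently with probability `p`. -/
noncomputable def Rnp (n : ℕ) (p : ℝ) : Measure (Finset (Fin n) → Bool) :=
  Measure.pi fun _ => (PMF.bernoulli (min (Real.toNNReal p) 1) (min_le_right _ _)).toMeasure

/-- `S` is a hitting set for the selected family `ω`. -/
def Hits {n : ℕ} (S : Finset (Fin n)) (ω : Finset (Fin n) → Bool) : Prop :=
  ∀ A : Finset (Fin n), ω A = true → A.Nonempty → (A ∩ S).Nonempty

/-- The minimum size of a hitting set. -/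
noncomputable def hitNum {n : ℕ} (ω : Finset (Fin n) → Bool) : ℕ :=
  sInf {k | ∃ S : Finset (Fin n), S.card = k ∧ Hits S ω}


/-- `numHitting n m ω` is the number of `m`-element hitting sets. -/
noncomputable def numHitting (n m : ℕ) (ω : Finset (Fin n) → Bool) : ℕ :=
  {S : Finset (Fin n) | S.card = m ∧ Hits S ω}.ncard

/-
By linearity of expectation, `E[X_m]` is `C(n, m)` times the probability that a fixed `m`-set
`S` is hitting, i.e. that none of the `2^(n-m) - 1` nonempty sets disjoint from `S` is selected;
this is `(1 - p)^(2^(n-m) - 1) ≤ exp (-2^(n-m) p) ≤ exp (-2^φ)`.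
We take `2^φ(n) = n H(β) + √n`, where `H(β) = ln δ` is the binary entropy in nats.
One term of the binomial expansion of `((1 - β) + β)^n` gives `C(n, m) ≤ exp (n H(β) + O(φ))`,
and `φ = O(log n) = o(√n)`, so `C(n, m) exp (-2^φ) ≤ exp (O(log n) - √n) → 0`.
-/

section Hitting

variable {n : ℕ}

lemma card_filter_nonempty_disjoint (S : Finset (Fin n)) :
    (Finset.univ.filter fun A : Finset (Fin n) => A.Nonempty ∧ Disjoint A S).card =
      2 ^ (n - S.card) - 1 := by
  have : (Finset.univ.filter fun A : Finset (Fin n) => A.Nonempty ∧ Disjoint A S) =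
      Sᶜ.powerset.erase ∅ := by
    ext A
    simp [Finset.nonempty_iff_ne_empty, Finset.subset_compl_iff_disjoint_right, and_comm]
  rw [this, Finset.card_erase_of_mem (Finset.empty_mem_powerset _), Finset.card_powerset,
    Finset.card_compl, Fintype.card_fin]

lemma bernoulli_toMeasure_false {p : ℝ} (hp0 : 0 ≤ p) (hp1 : p ≤ 1) :
    (PMF.bernoulli (min p.toNNReal 1) (min_le_right _ _)).toMeasure {false} =
      ENNReal.ofReal (1 - p) := by
  rw [PMF.toMeasure_apply_singleton _ _ (measurableSet_singleton _), PMF.bernoulli_apply,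
    min_eq_left (Real.toNNReal_le_one.2 hp1), Bool.cond_false, ENNReal.ofReal_sub _ hp0,
    ENNReal.ofReal_one]
  rfl

lemma Rnp_setOf_hits_le {p : ℝ} (hp0 : 0 ≤ p) (hp1 : p ≤ 1) (S : Finset (Fin n)) :
    Rnp n p {ω | Hits S ω} ≤ ENNReal.ofReal (1 - p) ^ (2 ^ (n - S.card) - 1) := by
  classical
  let t : Finset (Fin n) → Set Bool := fun A =>
    if A.Nonempty ∧ Disjoint A S then {false} else Set.univ
  have hsub : {ω | Hits S ω} ⊆ Set.univ.pi t := by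
    intro ω hω A _
    by_cases hA : A.Nonempty ∧ Disjoint A S
    · simp only [t, if_pos hA, Set.mem_singleton_iff, Bool.eq_false_iff]
      intro hωA
      exact Finset.not_disjoint_iff_nonempty_inter.2 (hω A hωA hA.1) hA.2
    · simp [t, if_neg hA]
  calc Rnp n p {ω | Hits S ω} ≤ Rnp n p (Set.univ.pi t) := measure_mono hsub
    _ = ∏ A, if A.Nonempty ∧ Disjoint A S then ENNReal.ofReal (1 - p) else 1 := by
      rw [Rnp, Measure.pi_pi]
      refine Finset.prod_congr rfl fun A _ => ?_
      split_ifs with hA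
      · simp only [t, if_pos hA, bernoulli_toMeasure_false hp0 hp1]
      · simp only [t, if_neg hA, measure_univ]
    _ = ENNReal.ofReal (1 - p) ^ (2 ^ (n - S.card) - 1) := by
      rw [Finset.prod_ite, Finset.prod_const_one, mul_one, Finset.prod_const,
        card_filter_nonempty_disjoint]

lemma numHitting_eq_sum_indicator (m : ℕ) (ω : Finset (Fin n) → Bool) :
    (numHitting n m ω : ℝ≥0∞) =
      ∑ S ∈ Finset.univ.powersetCard m, {ω | Hits S ω}.indicator 1 ω := by
  classical
  have : {S : Finset (Fin n) | S.card = m ∧ Hits S ω} =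
      ↑((Finset.univ.powersetCard m).filter fun S => Hits S ω) := by
    ext S; simp [Finset.mem_powersetCard]
  rw [numHitting, this, Set.ncard_coe_finset, Finset.card_filter]
  push_cast
  simp [Set.indicator_apply]

lemma lintegral_numHitting_le {p : ℝ} (hp0 : 0 ≤ p) (hp1 : p ≤ 1) (m : ℕ) :
    ∫⁻ ω, (numHitting n m ω : ℝ≥0∞) ∂(Rnp n p) ≤
      n.choose m * ENNReal.ofReal (1 - p) ^ (2 ^ (n - m) - 1) := by
  have hmeas (s : Set (Finset (Fin n) → Bool)) : MeasurableSet s := s.toFinite.measurableSet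
  simp_rw [numHitting_eq_sum_indicator]
  rw [lintegral_finsetSum _ fun S _ => measurable_one.indicator (hmeas _)]
  calc ∑ S ∈ Finset.univ.powersetCard m, ∫⁻ ω, {ω | Hits S ω}.indicator 1 ω ∂(Rnp n p)
      ≤ ∑ _S ∈ Finset.univ.powersetCard m, ENNReal.ofReal (1 - p) ^ (2 ^ (n - m) - 1) := by
        refine Finset.sum_le_sum fun S hS => ?_
        rw [lintegral_indicator_one (hmeas _), ← (Finset.mem_powersetCard.1 hS).2]
        exact Rnp_setOf_hits_le hp0 hp1 S
    _ = n.choose m * ENNReal.ofReal (1 - p) ^ (2 ^ (n - m) - 1) := by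
        rw [Finset.sum_const, Finset.card_powersetCard, Finset.card_univ, Fintype.card_fin,
          nsmul_eq_mul]

end Hitting

lemma log_one_sub_le_neg_sub_sq_div_two {p : ℝ} (hp0 : 0 ≤ p) (hp1 : p < 1) :
    log (1 - p) ≤ -(p + p ^ 2 / 2) := by
  have hsum := Real.hasSum_pow_div_log_of_abs_lt_one (abs_lt.2 ⟨by linarith, hp1⟩)
  have := sum_le_hasSum (Finset.range 2) (fun i _ => by positivity) hsum
  norm_num [Finset.sum_range_succ] at this
  linarith

/-- The `- 1` in the exponent is paid for by the second-order term of `log (1 - p)`. -/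
lemma one_sub_pow_pred_le_exp_neg {p : ℝ} (hp0 : 0 ≤ p) (hp1 : p < 1) {K : ℕ}
    (hK : 3 ≤ K * p) : (1 - p) ^ (K - 1) ≤ exp (-(K * p)) := by
  have hK1 : 1 ≤ K := Nat.one_le_iff_ne_zero.2 (by rintro rfl; norm_num at hK)
  rw [← exp_log (by linarith : 0 < 1 - p), ← exp_nat_mul, exp_le_exp, Nat.cast_pred hK1]
  have := log_one_sub_le_neg_sub_sq_div_two hp0 hp1
  nlinarith

lemma lintegral_numHitting_le_choose_mul_exp {n m : ℕ} {p T : ℝ} (hp0 : 0 ≤ p) (hp1 : p < 1)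
    (hT : 3 ≤ T) (hTp : T ≤ 2 ^ (n - m) * p) :
    ∫⁻ ω, (numHitting n m ω : ℝ≥0∞) ∂(Rnp n p) ≤ ENNReal.ofReal (n.choose m * exp (-T)) := by
  have hpow : (1 - p) ^ (2 ^ (n - m) - 1) ≤ exp (-T) := by
    refine (one_sub_pow_pred_le_exp_neg hp0 hp1 (K := 2 ^ (n - m)) ?_).trans ?_
    · push_cast; linarith
    · rw [exp_le_exp]; push_cast; linarith
  refine (lintegral_numHitting_le hp0 hp1.le m).trans ?_
  rw [ENNReal.ofReal_mul (Nat.cast_nonneg _), ENNReal.ofReal_natCast,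
    ← ENNReal.ofReal_pow (by linarith)]
  gcongr

lemma lintegral_numHitting_floor_le {β φ : ℝ} {n : ℕ} (hβ : 0 < β) (hφ : 3 ≤ (2 : ℝ) ^ φ)
    (hφn : φ ≤ (1 - β) * n) :
    ∫⁻ ω, (numHitting n ⌊(1 - β) * n - φ⌋.toNat ω : ℝ≥0∞) ∂(Rnp n ((2 : ℝ) ^ (-(β * n)))) ≤
      ENNReal.ofReal (n.choose ⌊(1 - β) * n - φ⌋.toNat * exp (-(2 : ℝ) ^ φ)) := by
  set m := ⌊(1 - β) * n - φ⌋.toNat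
  have hφ0 : 0 ≤ φ := by
    by_contra! h
    linarith [Real.rpow_le_one_of_one_le_of_nonpos one_le_two h.le]
  have hn : 0 < (n : ℝ) := by
    by_contra! h
    nlinarith [Real.rpow_le_one_of_one_le_of_nonpos one_le_two (by nlinarith : φ ≤ 0)]
  have hm : (m : ℝ) ≤ (1 - β) * n - φ := by
    simpa only [m, Int.floor_toNat] using Nat.floor_le (by linarith : 0 ≤ (1 - β) * n - φ)
  have hmn : m ≤ n := by exact_mod_cast (show (m : ℝ) ≤ n by nlinarith)
  refine lintegral_numHitting_le_choose_mul_exp (by positivity) ?_ hφ ?_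
  · exact Real.rpow_lt_one_of_one_lt_of_neg one_lt_two (by nlinarith)
  · rw [← Real.rpow_natCast, ← Real.rpow_add two_pos, Nat.cast_sub hmn]
    exact Real.rpow_le_rpow_of_exponent_le one_le_two (by linarith)

lemma log_rpow_neg_mul_rpow_neg_eq_binEntropy {β : ℝ} (hβ0 : 0 < β) (hβ1 : β < 1) :
    log (β ^ (-β) * (1 - β) ^ (-(1 - β))) = binEntropy β := by
  have hβ' : 0 < 1 - β := by linarith
  rw [log_mul (by positivity) (by positivity), log_rpow hβ0, log_rpow hβ', binEntropy, log_inv,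
    log_inv]
  ring

lemma choose_mul_pow_mul_pow_le_one {n m : ℕ} (hm : m ≤ n) {x : ℝ} (hx0 : 0 ≤ x) (hx1 : x ≤ 1) :
    (n.choose m : ℝ) * x ^ m * (1 - x) ^ (n - m) ≤ 1 := by
  have hx1' : 0 ≤ 1 - x := by linarith
  calc (n.choose m : ℝ) * x ^ m * (1 - x) ^ (n - m) = x ^ m * (1 - x) ^ (n - m) * n.choose m := by
        ring
    _ ≤ ∑ k ∈ Finset.range (n + 1), x ^ k * (1 - x) ^ (n - k) * n.choose k :=
        Finset.single_le_sum (f := fun k => x ^ k * (1 - x) ^ (n - k) * n.choose k)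
          (fun k _ => by positivity) (Finset.mem_range_succ_iff.2 hm)
    _ = 1 := by rw [← add_pow, add_sub_cancel, one_pow]

lemma choose_le_exp_binEntropy {n m : ℕ} (hm : m ≤ n) {β : ℝ} (hβ0 : 0 < β) (hβ1 : β < 1) :
    (n.choose m : ℝ) ≤ exp (n * binEntropy β + ((1 - β) * n - m) * log ((1 - β) / β)) := by
  have hβ' : 0 < 1 - β := by linarith
  have h := choose_mul_pow_mul_pow_le_one hm hβ'.le (by linarith)
  have hpow₁ : (1 - β) ^ m = exp (m * log (1 - β)) := by rw [exp_nat_mul, exp_log hβ']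
  have hpow₂ : (1 - (1 - β)) ^ (n - m) = exp ((n - m : ℕ) * log β) := by
    rw [sub_sub_cancel, exp_nat_mul, exp_log hβ0]
  rw [hpow₁, hpow₂, mul_assoc, ← exp_add] at h
  have hexp : exp (n * binEntropy β + ((1 - β) * n - m) * log ((1 - β) / β)) =
      1 / exp (m * log (1 - β) + (n - m : ℕ) * log β) := by
    rw [one_div, ← exp_neg, binEntropy, log_inv, log_inv, log_div hβ'.ne' hβ0.ne', Nat.cast_sub hm]
    ring_nf
  rwa [hexp, le_div_iff₀ (exp_pos _)]

lemma choose_floor_le_exp {β φ : ℝ} {n : ℕ} (hβ0 : 0 < β) (hβ1 : β < 1) (hφ0 : 0 ≤ φ)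
    (hφn : φ ≤ (1 - β) * n) :
    (n.choose ⌊(1 - β) * n - φ⌋.toNat : ℝ) ≤
      exp (n * binEntropy β + (φ + 1) * |log ((1 - β) / β)|) := by
  set m := ⌊(1 - β) * n - φ⌋.toNat
  have hm : (m : ℝ) ≤ (1 - β) * n - φ := by
    simpa only [m, Int.floor_toNat] using Nat.floor_le (by linarith : 0 ≤ (1 - β) * n - φ)
  have hm' : (1 - β) * n - φ < m + 1 := by
    simpa only [m, Int.floor_toNat] using Nat.lt_floor_add_one ((1 - β) * n - φ)
  have hmn : m ≤ n := by exact_mod_cast (show (m : ℝ) ≤ n by nlinarith)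
  refine (choose_le_exp_binEntropy hmn hβ0 hβ1).trans (exp_le_exp.2 ?_)
  have hslack : ((1 - β) * n - m) * log ((1 - β) / β) ≤ (φ + 1) * |log ((1 - β) / β)| :=
    calc ((1 - β) * n - m) * log ((1 - β) / β)
        ≤ ((1 - β) * n - m) * |log ((1 - β) / β)| :=
          mul_le_mul_of_nonneg_left (le_abs_self _) (by linarith)
      _ ≤ (φ + 1) * |log ((1 - β) / β)| := by gcongr; linarith
  linarith

lemma tendsto_logb_mul_add_sqrt_sub_logb_mul {L : ℝ} (hL : 0 < L) :
    Tendsto (fun n : ℕ => logb 2 (n * L + √n) - logb 2 (n * L)) atTop (nhds 0) := by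
  have hratio : Tendsto (fun n : ℕ => 1 + 1 / (L * √n)) atTop (nhds 1) := by
    simpa using ((tendsto_inv_atTop_zero.comp
      ((tendsto_sqrt_atTop.comp tendsto_natCast_atTop_atTop).const_mul_atTop hL))).const_add 1
  have hlogb := ((continuousAt_logb (b := 2) one_ne_zero).tendsto.comp hratio)
  rw [logb_one] at hlogb
  refine hlogb.congr' ?_
  filter_upwards [eventually_gt_atTop 0] with n hn
  have hn : (0 : ℝ) < n := by exact_mod_cast hn
  rw [Function.comp_apply, ← logb_div (by positivity) (by positivity)]
  congr 1
  field_simp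
  linear_combination -mul_self_sqrt hn.le

lemma eventually_mul_add_sqrt_le {L : ℝ} (hL : L < 1) :
    ∀ᶠ n : ℕ in atTop, n * L + √n ≤ n := by
  filter_upwards [(tendsto_sqrt_atTop.comp tendsto_natCast_atTop_atTop).eventually_ge_atTop
    (1 / (1 - L))] with n hn
  have hsq : √(n : ℝ) * √n = n := mul_self_sqrt (Nat.cast_nonneg n)
  rw [Function.comp_apply, div_le_iff₀ (by linarith)] at hn
  nlinarith [sqrt_nonneg (n : ℝ)]

lemma eventually_logb_le_mul {c : ℝ} (hc : 0 < c) :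
    ∀ᶠ n : ℕ in atTop, logb 2 n ≤ c * n := by
  have hbound := (isLittleO_log_id_atTop.bound (mul_pos hc (log_pos one_lt_two))).natCast_atTop
  filter_upwards [hbound, eventually_ge_atTop 1] with n hn hn1
  have hn1 : (1 : ℝ) ≤ n := by exact_mod_cast hn1
  rw [norm_of_nonneg (log_nonneg hn1), id, norm_of_nonneg (by linarith)] at hn
  rw [logb, div_le_iff₀ (log_pos one_lt_two)]
  linarith

lemma tendsto_exp_mul_logb_add_one_sub_sqrt (c : ℝ) :
    Tendsto (fun n : ℕ => exp (c * (logb 2 n + 1) - √n)) atTop (nhds 0) := by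
  have hsqrt : Tendsto (fun x : ℝ => √x) atTop atTop := tendsto_sqrt_atTop
  have hlittle : (fun x : ℝ => c * (logb 2 x + 1)) =o[atTop] fun x => √x := by
    have hlog : log =o[atTop] fun x => √x := by
      simpa only [sqrt_eq_rpow] using isLittleO_log_rpow_atTop (by norm_num : (0 : ℝ) < 1 / 2)
    have hconst : (fun _ : ℝ => (1 : ℝ)) =o[atTop] fun x => √x :=
      Asymptotics.isLittleO_const_left.2 (Or.inr (tendsto_norm_atTop_atTop.comp hsqrt))
    simpa only [logb, div_eq_mul_inv, mul_comm (log _)] using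
      ((hlog.const_mul_left (log 2)⁻¹).add hconst).const_mul_left c
  have hexponent : Tendsto (fun x : ℝ => c * (logb 2 x + 1) - √x) atTop atBot := by
    refine tendsto_atBot_mono' atTop ?_ (tendsto_neg_atTop_atBot.comp (hsqrt.atTop_div_const
      (two_pos : (0 : ℝ) < 2)))
    filter_upwards [hlittle.bound (by norm_num : (0 : ℝ) < 1 / 2)] with x hx
    rw [norm_of_nonneg (sqrt_nonneg x), norm_eq_abs] at hx
    simp only [Function.comp_apply]
    linarith [le_abs_self (c * (logb 2 x + 1))]
  exact tendsto_exp_atBot.comp (hexponent.comp tendsto_natCast_atTop_atTop)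

/-- Dense case first moment bound: for `p = 2^{-βn}` and a suitable
`φ(n) = lg(n ln δ) + o(1)` with `φ(n) ≤ lg n`, taking `m = (1-β)n - φ(n)`, the
expected number of `m`-element hitting sets is at most `C(n,m)·exp(-2^{φ(n)}) → 0`. -/
theorem dense_first_moment (β : ℝ) (hβ0 : 0 < β) (hβ1 : β < 1) :
    ∃ φ : ℕ → ℝ,
      Tendsto (fun n : ℕ =>
          φ n - Real.logb 2 ((n : ℝ) * Real.log (β ^ (-β) * (1 - β) ^ (-(1 - β)))))
        atTop (nhds 0) ∧
      (∀ᶠ n : ℕ in atTop, φ n ≤ Real.logb 2 n) ∧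
      (∀ᶠ n : ℕ in atTop,
        ∫⁻ ω, (numHitting n ((⌊(1 - β) * n - φ n⌋).toNat) ω : ℝ≥0∞)
            ∂(Rnp n ((2 : ℝ) ^ (-(β * n)))) ≤
          ENNReal.ofReal ((n.choose ((⌊(1 - β) * n - φ n⌋).toNat) : ℝ) *
            Real.exp (-(2 : ℝ) ^ (φ n)))) ∧
      Tendsto (fun n : ℕ =>
          (n.choose ((⌊(1 - β) * n - φ n⌋).toNat) : ℝ) * Real.exp (-(2 : ℝ) ^ (φ n)))
        atTop (nhds 0) := by
  set H := binEntropy β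
  have hH0 : 0 < H := binEntropy_pos hβ0 hβ1
  have hH1 : H < 1 := binEntropy_le_log_two.trans_lt (by linarith [log_two_lt_d9])
  set φ : ℕ → ℝ := fun n => logb 2 (n * H + √n)
  have hφ : ∀ᶠ n : ℕ in atTop, (2 : ℝ) ^ φ n = n * H + √n ∧ 3 ≤ n * H + √n ∧ 0 ≤ φ n ∧
      φ n ≤ logb 2 n ∧ φ n ≤ (1 - β) * n := by
    filter_upwards [(tendsto_sqrt_atTop.comp tendsto_natCast_atTop_atTop).eventually_ge_atTop 3,
      eventually_mul_add_sqrt_le hH1, eventually_logb_le_mul (sub_pos.2 hβ1)] with n h3 hsum hlog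
    have h3 : 3 ≤ n * H + √n := by
      simp only [Function.comp_apply] at h3
      nlinarith [mul_nonneg (Nat.cast_nonneg n) hH0.le]
    have hle : φ n ≤ logb 2 n := logb_le_logb_of_le one_lt_two (by linarith) hsum
    exact ⟨rpow_logb two_pos (by norm_num) (by linarith), h3,
      logb_nonneg one_lt_two (by linarith), hle, hle.trans hlog⟩
  rw [log_rpow_neg_mul_rpow_neg_eq_binEntropy hβ0 hβ1]
  refine ⟨φ, tendsto_logb_mul_add_sqrt_sub_logb_mul hH0, ?_, ?_, ?_⟩
  · filter_upwards [hφ] with n hn using hn.2.2.2.1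
  · filter_upwards [hφ] with n hn
    obtain ⟨h2φ, h3, -, -, hφn⟩ := hn
    exact lintegral_numHitting_floor_le hβ0 (h2φ ▸ h3) hφn
  · refine squeeze_zero' (Eventually.of_forall fun n => by positivity) ?_
      (tendsto_exp_mul_logb_add_one_sub_sqrt |log ((1 - β) / β)|)
    filter_upwards [hφ] with n hn
    obtain ⟨h2φ, -, hφ0, hφlog, hφn⟩ := hn
    calc (n.choose ⌊(1 - β) * n - φ n⌋.toNat : ℝ) * exp (-(2 : ℝ) ^ φ n)
        ≤ exp (n * H + (φ n + 1) * |log ((1 - β) / β)|) * exp (-(n * H + √n)) := by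
          rw [h2φ]; gcongr; exact choose_floor_le_exp hβ0 hβ1 hφ0 hφn
      _ ≤ exp (|log ((1 - β) / β)| * (logb 2 n + 1) - √n) := by
          rw [← exp_add, exp_le_exp]
          nlinarith [abs_nonneg (log ((1 - β) / β))]
end
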